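/- Let Σ_m be a real n×n positive semidefinite matrix, Φ a real ℓ×n matrix with rank(Σ_m^{1/2}·Φᵀ·Φ·Σ_m^{1/2}) = rank(Σ_m), and μ ∈ range(Σ_m). For σ² > 0 define W_m(σ²) := Σ_m·Φᵀ·(σ²·I_ℓ + Φ·Σ_m·Φᵀ)⁻¹. Then lim_{σ²→0⁺} tr(W_m(σ²)·Φ·(μ·μᵀ)·Φᵀ·W_m(σ²)ᵀ) = ‖μ‖², i.e., ‖W_m(σ²)·Φ·μ‖² tends to ‖μ‖² as σ² → 0⁺. -/

import Mathlib

/-!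
Put `A = Σ^{1/2}` and `X = A Φᵀ`, so that `Σ Φᵀ = A X`, `Φ Σ Φᵀ = Xᵀ X` and `A Φᵀ Φ A = X Xᵀ`.
The push-through identity `X (σ² + XᵀX)⁻¹ = (σ² + XXᵀ)⁻¹ X` gives
`W(σ²) Φ A = A (1 - σ² (σ² + XXᵀ)⁻¹)`. The rank hypothesis forces `range (XXᵀ) = range A`, so
`μ = A XXᵀ w` for some `w`, and then `W(σ²) Φ μ = μ - σ² A z` where `(σ² + XXᵀ) z = XXᵀ w`.
Pairing this equation with `z` and completing the square gives `4 σ² ‖z‖² ≤ ‖Xᵀ w‖²`, so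
`σ² z = O(σ)` tends to `0`. Finally the trace is `‖W(σ²) Φ μ‖²`.
-/

open Matrix Filter Topology

section OldSqrt

open scoped ComplexOrder

/-- The positive semidefinite square root of a positive semidefinite matrix
(the Mathlib definition of December 2024, since removed from Mathlib). -/
noncomputable def Matrix.PosSemidef.sqrt {n 𝕜 : Type*} [Fintype n] [DecidableEq n] [RCLike 𝕜]
    {A : Matrix n n 𝕜} (hA : A.PosSemidef) : Matrix n n 𝕜 :=
  hA.1.eigenvectorUnitary.1 * diagonal ((↑) ∘ (Real.sqrt ·) ∘ hA.1.eigenvalues) *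
  (star hA.1.eigenvectorUnitary : Matrix n n 𝕜)

end OldSqrt

lemma tendsto_zero_of_dotProduct_self_le {α ι : Type*} [Fintype ι] {l : Filter α}
    {f : α → ι → ℝ} {g : α → ℝ} (hg : Tendsto g l (𝓝 0)) (hfg : ∀ᶠ a in l, f a ⬝ᵥ f a ≤ g a) :
    Tendsto f l (𝓝 0) := by
  refine tendsto_pi_nhds.2 fun i => squeeze_zero_norm' ?_ (by simpa using hg.sqrt)
  filter_upwards [hfg] with a ha
  refine Real.abs_le_sqrt (le_trans ?_ ha)
  simpa [dotProduct, sq] using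
    Finset.single_le_sum (fun j _ => mul_self_nonneg (f a j)) (Finset.mem_univ i)

namespace Matrix

section Sqrt

open scoped ComplexOrder

variable {n 𝕜 : Type*} [Fintype n] [DecidableEq n] [RCLike 𝕜] {A : Matrix n n 𝕜}

lemma PosSemidef.posSemidef_sqrt (hA : A.PosSemidef) : hA.sqrt.PosSemidef := by
  refine PosSemidef.mul_mul_conjTranspose_same (posSemidef_diagonal_iff.mpr fun i => ?_) _
  simp [Real.sqrt_nonneg]

lemma PosSemidef.sqrt_mul_self (hA : A.PosSemidef) : hA.sqrt * hA.sqrt = A := by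
  have hUU : star hA.1.eigenvectorUnitary.1 * hA.1.eigenvectorUnitary.1 = 1 :=
    Unitary.coe_star_mul_self _
  have hDD : diagonal ((↑) ∘ (Real.sqrt ·) ∘ hA.1.eigenvalues) *
      diagonal ((↑) ∘ (Real.sqrt ·) ∘ hA.1.eigenvalues) =
        diagonal ((↑) ∘ hA.1.eigenvalues : n → 𝕜) := by
    rw [diagonal_mul_diagonal]
    congr 1
    funext i
    simp [← RCLike.ofReal_mul, Real.mul_self_sqrt (hA.eigenvalues_nonneg i)]
  conv_rhs => rw [hA.1.spectral_theorem, Unitary.conjStarAlgAut_apply]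
  simp only [PosSemidef.sqrt, Matrix.mul_assoc]
  rw [← Matrix.mul_assoc (star _) hA.1.eigenvectorUnitary.1, hUU, Matrix.one_mul,
    ← Matrix.mul_assoc (diagonal _) (diagonal _), hDD]

end Sqrt

lemma range_mulVecLin_mul_eq_of_rank_eq {m n p K : Type*} [Fintype m] [Fintype n] [Fintype p]
    [Field K] {B : Matrix m n K} {C : Matrix n p K} (h : (B * C).rank = B.rank) :
    LinearMap.range (B * C).mulVecLin = LinearMap.range B.mulVecLin := by
  refine Submodule.eq_of_le_of_finrank_le ?_ h.ge
  rw [mulVecLin_mul]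
  exact LinearMap.range_comp_le_range _ _

lemma exists_mulVec_mul_transpose_mulVec_eq_of_rank_eq {n l : Type*} [Fintype n] [Fintype l]
    {A : Matrix n n ℝ} (hAt : Aᵀ = A) {Φ : Matrix l n ℝ}
    (hrank : (A * Φᵀ * Φ * A).rank = (A * A).rank) {μ : n → ℝ}
    (hμ : μ ∈ LinearMap.range (A * A).mulVecLin) :
    ∃ w, A *ᵥ ((A * Φᵀ * (A * Φᵀ)ᵀ) *ᵥ w) = μ := by
  have hXXt : A * Φᵀ * (A * Φᵀ)ᵀ = A * (Φᵀ * Φ * A) := by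
    simp only [transpose_mul, transpose_transpose, hAt, Matrix.mul_assoc]
  have hrange : LinearMap.range (A * Φᵀ * (A * Φᵀ)ᵀ).mulVecLin = LinearMap.range A.mulVecLin := by
    rw [hXXt]
    refine range_mulVecLin_mul_eq_of_rank_eq ?_
    rw [← Matrix.mul_assoc, ← Matrix.mul_assoc, hrank, ← rank_transpose_mul_self A, hAt]
  obtain ⟨u, rfl⟩ := hμ
  obtain ⟨w, hw⟩ : A *ᵥ u ∈ LinearMap.range (A * Φᵀ * (A * Φᵀ)ᵀ).mulVecLin := hrange ▸ ⟨u, rfl⟩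
  rw [mulVecLin_apply] at hw
  exact ⟨w, by rw [hw, mulVec_mulVec, mulVecLin_apply]⟩

section Tikhonov

variable {m k : Type*} [Fintype m] [Fintype k]

lemma four_mul_mul_dotProduct_self_le_of_smul_add_mulVec_eq (X : Matrix m k ℝ) {σ : ℝ} {z w : m → ℝ}
    (h : σ • z + (X * Xᵀ) *ᵥ z = (X * Xᵀ) *ᵥ w) :
    4 * σ * (z ⬝ᵥ z) ≤ (Xᵀ *ᵥ w) ⬝ᵥ (Xᵀ *ᵥ w) := by
  have hquad (y : m → ℝ) : z ⬝ᵥ ((X * Xᵀ) *ᵥ y) = (Xᵀ *ᵥ z) ⬝ᵥ (Xᵀ *ᵥ y) := by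
    rw [← mulVec_mulVec, dotProduct_mulVec, ← mulVec_transpose]
  have hσz : σ * (z ⬝ᵥ z) = (Xᵀ *ᵥ z) ⬝ᵥ (Xᵀ *ᵥ w) - (Xᵀ *ᵥ z) ⬝ᵥ (Xᵀ *ᵥ z) := by
    have hdot := congrArg (z ⬝ᵥ ·) h
    simp only [dotProduct_add, dotProduct_smul, smul_eq_mul, hquad] at hdot
    linarith
  have hsq := dotProduct_star_self_nonneg ((2 : ℝ) • (Xᵀ *ᵥ z) - Xᵀ *ᵥ w)
  simp only [star_trivial, dotProduct_sub, sub_dotProduct, dotProduct_smul, smul_dotProduct,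
    smul_eq_mul, dotProduct_comm (Xᵀ *ᵥ w)] at hsq
  linarith

variable [DecidableEq m]

lemma isUnit_det_smul_one_add_mul_transpose (X : Matrix m k ℝ) {σ : ℝ} (hσ : 0 < σ) :
    IsUnit (σ • 1 + X * Xᵀ).det := by
  have hσ1 : (σ • 1 : Matrix m m ℝ).PosDef := PosDef.one.smul hσ
  refine (isUnit_iff_isUnit_det _).mp (hσ1.add_posSemidef ?_).isUnit
  simpa using posSemidef_self_mul_conjTranspose X

lemma mul_inv_smul_one_add_transpose_mul_mul_transpose [DecidableEq k] (X : Matrix m k ℝ) {σ : ℝ}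
    (hσ : 0 < σ) :
    X * (σ • 1 + Xᵀ * X)⁻¹ * Xᵀ = 1 - σ • (σ • 1 + X * Xᵀ)⁻¹ := by
  set S := σ • 1 + X * Xᵀ
  set T := σ • 1 + Xᵀ * X
  have hS : IsUnit S.det := isUnit_det_smul_one_add_mul_transpose X hσ
  have hT : IsUnit T.det := by simpa using isUnit_det_smul_one_add_mul_transpose Xᵀ hσ
  have hSX : S * X = X * T := by
    simp only [S, T, Matrix.add_mul, Matrix.mul_add, Matrix.smul_mul, Matrix.mul_smul,
      Matrix.one_mul, Matrix.mul_one, Matrix.mul_assoc]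
  have hpush : X * T⁻¹ = S⁻¹ * X := by
    conv_lhs => rw [← nonsing_inv_mul_cancel_left S (X * T⁻¹) hS, ← Matrix.mul_assoc S, hSX,
      mul_nonsing_inv_cancel_right T X hT]
  have hXXt : X * Xᵀ = S - σ • 1 := by simp [S]
  rw [hpush, Matrix.mul_assoc, hXXt, Matrix.mul_sub, nonsing_inv_mul S hS, Matrix.mul_smul,
    Matrix.mul_one]

lemma tendsto_smul_inv_smul_one_add_mul_transpose_mulVec (X : Matrix m k ℝ) (w : m → ℝ) :
    Tendsto (fun σ : ℝ => σ • ((σ • 1 + X * Xᵀ)⁻¹ *ᵥ ((X * Xᵀ) *ᵥ w))) (𝓝[>] 0) (𝓝 0) := by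
  set c := (Xᵀ *ᵥ w) ⬝ᵥ (Xᵀ *ᵥ w) / 4 with hc
  have hlin : Tendsto (fun σ : ℝ => σ * c) (𝓝[>] 0) (𝓝 0) := by
    simpa using ((continuous_mul_const c).tendsto 0).mono_left nhdsWithin_le_nhds
  refine tendsto_zero_of_dotProduct_self_le hlin ?_
  filter_upwards [self_mem_nhdsWithin] with σ (hσ : 0 < σ)
  set z := (σ • 1 + X * Xᵀ)⁻¹ *ᵥ ((X * Xᵀ) *ᵥ w)
  have hz : σ • z + (X * Xᵀ) *ᵥ z = (X * Xᵀ) *ᵥ w := by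
    have : (σ • 1 + X * Xᵀ) *ᵥ z = (X * Xᵀ) *ᵥ w := by
      rw [mulVec_mulVec, mul_nonsing_inv _ (isUnit_det_smul_one_add_mul_transpose X hσ),
        one_mulVec]
    simpa only [add_mulVec, smul_mulVec, one_mulVec] using this
  have hbound : σ * (z ⬝ᵥ z) ≤ c := by
    linarith [four_mul_mul_dotProduct_self_le_of_smul_add_mulVec_eq X hz]
  rw [dotProduct_smul, smul_dotProduct, smul_eq_mul, smul_eq_mul]
  exact mul_le_mul_of_nonneg_left hbound hσ.le

end Tikhonov

end Matrix

/-- If rank(Σ_m^{1/2}·Φᵀ·Φ·Σ_m^{1/2}) = rank(Σ_m) and μ ∈ range(Σ_m), then,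
with W_m(σ²) = Σ_m·Φᵀ·(σ²·I + Φ·Σ_m·Φᵀ)⁻¹, tr(W_m(σ²)·Φ·(μ·μᵀ)·Φᵀ·W_m(σ²)ᵀ) → ‖μ‖² = μ ⬝ μ
as σ² → 0⁺. -/
theorem stmt_17 {n l : ℕ} (Sm : Matrix (Fin n) (Fin n) ℝ) (hSm : Sm.PosSemidef)
    (Φ : Matrix (Fin l) (Fin n) ℝ)
    (hrank : (hSm.sqrt * Φᵀ * Φ * hSm.sqrt).rank = Sm.rank)
    (μ : Fin n → ℝ) (hμ : μ ∈ LinearMap.range Sm.mulVecLin)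
    (W : ℝ → Matrix (Fin n) (Fin l) ℝ)
    (hW : ∀ σ2 : ℝ, W σ2 = Sm * Φᵀ * (σ2 • (1 : Matrix (Fin l) (Fin l) ℝ) + Φ * Sm * Φᵀ)⁻¹) :
    Tendsto (fun σ2 : ℝ => (W σ2 * Φ * Matrix.vecMulVec μ μ * Φᵀ * (W σ2)ᵀ).trace)
      (nhdsWithin 0 (Set.Ioi 0)) (nhds (μ ⬝ᵥ μ)) := by
  set A := hSm.sqrt
  have hAt : Aᵀ = A := by simpa using hSm.posSemidef_sqrt.isHermitian.eq
  have hAA : A * A = Sm := hSm.sqrt_mul_self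
  set X := A * Φᵀ
  obtain ⟨w, hw⟩ := exists_mulVec_mul_transpose_mulVec_eq_of_rank_eq hAt (hAA ▸ hrank)
    (hAA ▸ hμ)
  have hWΦμ : ∀ σ > 0, (W σ * Φ) *ᵥ μ =
      μ - A *ᵥ (σ • ((σ • 1 + X * Xᵀ)⁻¹ *ᵥ ((X * Xᵀ) *ᵥ w))) := by
    intro σ hσ
    have hWΦA : W σ * Φ * A = A * (X * (σ • 1 + Xᵀ * X)⁻¹ * Xᵀ) := by
      simp only [hW, ← hAA, X, transpose_mul, transpose_transpose, hAt, Matrix.mul_assoc]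
    rw [← hw, mulVec_mulVec _ (W σ * Φ) A, hWΦA,
      mul_inv_smul_one_add_transpose_mul_mul_transpose X hσ, ← mulVec_mulVec, sub_mulVec,
      one_mulVec, smul_mulVec, mulVec_sub, mulVec_smul]
  have hlim : Tendsto (fun σ => (W σ * Φ) *ᵥ μ) (𝓝[>] 0) (𝓝 μ) := by
    have h := ((A.mulVecLin.continuous_of_finiteDimensional.tendsto 0).comp
      (tendsto_smul_inv_smul_one_add_mul_transpose_mulVec X w)).const_sub μ
    simp only [map_zero, sub_zero] at h
    refine h.congr' ?_
    filter_upwards [self_mem_nhdsWithin] with σ hσ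
    exact (hWΦμ σ hσ).symm
  have htrace (σ : ℝ) : (W σ * Φ * vecMulVec μ μ * Φᵀ * (W σ)ᵀ).trace =
      ((W σ * Φ) *ᵥ μ) ⬝ᵥ ((W σ * Φ) *ᵥ μ) := by
    rw [mul_vecMulVec, vecMulVec_mul, vecMulVec_mul, trace_vecMulVec, vecMul_vecMul,
      ← transpose_mul, vecMul_transpose]
  simp only [htrace]
  exact ((continuous_id.dotProduct continuous_id).tendsto μ).comp hlim
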